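/- arXiv:2111.12387 — 3 statements merged into one kernel-verified Lean document; each statement's English description precedes it below -/
import Mathlib

section
/- Let D = (V, A) be a directed acyclic graph. If the acyclic reorientation poset AR(D) is a lattice, then the transitive reduction of D is a forest. -/
def ArcRel {V : Type*} (E : Set (V × V)) : V → V → Prop := fun x y => (x, y) ∈ E

/-- `E` has no directed cycle. -/
def AcyclicArcs {V : Type*} (E : Set (V × V)) : Prop :=
  ∀ v : V, ¬ Relation.TransGen (ArcRel E) v v

/-- `A` is the arc set of a directed acyclic graph: arcs join distinct vertices,
at most one direction between two vertices, and no directed cycle. -/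
def IsDAG {V : Type*} (A : Set (V × V)) : Prop :=
  (∀ a ∈ A, a.1 ≠ a.2) ∧ (∀ a ∈ A, Prod.swap a ∉ A) ∧ AcyclicArcs A

/-- Arc set of the reorientation of `A` where exactly the arcs of `B` are reversed. -/
def reorient {V : Type*} (A B : Set (V × V)) : Set (V × V) :=
  (A \ B) ∪ (Prod.swap '' B)

/-- `B` encodes an acyclic reorientation of `A`. -/
def ARmem {V : Type*} (A B : Set (V × V)) : Prop :=
  B ⊆ A ∧ AcyclicArcs (reorient A B)

/-- The acyclic reorientation poset of `A`, ordered by inclusion of reversed sets. -/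
abbrev ARP {V : Type*} (A : Set (V × V)) := {B : Set (V × V) // ARmem A B}

/-- Transitive reduction: delete every arc whose endpoints are joined by a
directed path of length at least 2. -/
def transRed {V : Type*} (E : Set (V × V)) : Set (V × V) :=
  {a ∈ E | ¬ ∃ w : V, ArcRel E a.1 w ∧ Relation.TransGen (ArcRel E) w a.2}

/-- Underlying undirected graph of an arc set. -/
def undirectedGraph {V : Type*} (E : Set (V × V)) : SimpleGraph V :=
  SimpleGraph.fromRel (fun x y => (x, y) ∈ E)

/-- A directed graph is a forest if its underlying undirected graph has no cycle. -/
def IsForestArcs {V : Type*} (E : Set (V × V)) : Prop :=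
  (undirectedGraph E).IsAcyclic

/-!
Suppose the transitive reduction contains an undirected cycle `v 0, …, v (n - 1)`, and call
its edge at `i` forward if it is the arc `(v i, v (i + 1))`. Reversing one arc of the transitive
reduction keeps `D` acyclic, so the forward arcs give elements `{f}` of `AR(D)`; let `z` be their
join. At least two cycle edges are backward: with none, `D` has a directed cycle, and with one,
the other edges form a directed path of length `≥ 2` parallel to it. Given a backward edge `j`
and another backward edge `j'`, ordering the vertices by their position along the cycle after
`j'` gives an acyclic reorientation that reverses every forward arc but not the arc at `j`; it
bounds all `{f}`, so `z` does not reverse the arc at `j` either. Then every cycle edge points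
from `v (i + 1)` to `v i` in the reorientation `z`, a directed cycle.
-/

open Relation Function
open scoped Fin.CommRing

theorem exists_isLUB_of_finite {α : Type*} [Preorder α] (hpair : ∀ x y : α, ∃ z, IsLUB {x, y} z) {b : α} (hb : IsBot b)
    {s : Set α} (hs : s.Finite) : ∃ z, IsLUB s z := by
  induction s, hs using Set.Finite.induction_on with
  | empty => exact ⟨b, isLUB_empty_iff.2 hb⟩
  | @insert a s _ _ ih =>
    obtain ⟨c, hc⟩ := ih
    obtain ⟨d, hd⟩ := hpair a c
    have : upperBounds (insert a s) = upperBounds {a, c} := by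
      simp only [upperBounds_insert, hc.upperBounds_eq, upperBounds_singleton]
    exact ⟨d, by rw [IsLUB, this]; exact hd⟩

theorem SimpleGraph.exists_injective_cycle_of_not_isAcyclic {V : Type*} {G : SimpleGraph V}
    (hG : ¬ G.IsAcyclic) :
    ∃ (k : ℕ) (v : Fin (k + 3) → V), Injective v ∧ ∀ i, G.Adj (v i) (v (i + 1)) := by
  simp only [SimpleGraph.IsAcyclic, not_forall, not_not] at hG
  obtain ⟨u, p, hp⟩ := hG
  obtain ⟨k, hk⟩ : ∃ k, p.length = k + 3 := ⟨p.length - 3, by have := hp.three_le_length; omega⟩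
  refine ⟨k, fun i => p.getVert i, fun i j hij => Fin.ext ?_, fun i => ?_⟩
  · exact hp.getVert_injOn' (by simp only [Set.mem_ofPred_eq]; omega)
      (by simp only [Set.mem_ofPred_eq]; omega) hij
  · rcases Fin.eq_castSucc_or_eq_last i with ⟨i, rfl⟩ | rfl
    · rw [Fin.coeSucc_eq_succ]
      exact p.adj_getVert_succ (by simp only [Fin.val_castSucc]; omega)
    · have := p.adj_getVert_succ (i := k + 2) (by omega)
      simpa [Fin.last_add_one, ← hk, p.getVert_length] using this

section Arcs

variable {V : Type*}

theorem transGen_arcRel_of_forall_lt {E : Set (V × V)} {n : ℕ} [NeZero n] (v : Fin n → V)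
    (a : Fin n) {m : ℕ} (hm : 0 < m) (h : ∀ t < m, ArcRel E (v (a + t)) (v (a + t + 1))) :
    TransGen (ArcRel E) (v a) (v (a + m)) := by
  have := transGen_of_succ_of_lt (fun s t : ℕ => ArcRel E (v (a + s)) (v (a + t)))
    (fun t ht => by simpa [add_assoc] using h t ht.2) hm
  have h' : TransGen (ArcRel E) (v (a + ((0 : ℕ) : Fin n))) (v (a + m)) :=
    this.lift (fun t : ℕ => v (a + t)) fun _ _ h => h
  simpa using h'

theorem AcyclicArcs.not_forall_arcRel_succ {E : Set (V × V)} (hE : AcyclicArcs E) {n : ℕ}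
    [NeZero n] (v : Fin n → V) : ¬ ∀ i, ArcRel E (v i) (v (i + 1)) := fun h => by
  have := transGen_arcRel_of_forall_lt v 0 (NeZero.pos n) fun t _ => h _
  rw [Fin.natCast_self, add_zero] at this
  exact hE _ this

theorem AcyclicArcs.not_forall_arcRel_pred {E : Set (V × V)} (hE : AcyclicArcs E) {n : ℕ}
    [NeZero n] (v : Fin n → V) : ¬ ∀ i, ArcRel E (v (i + 1)) (v i) := fun h =>
  hE.not_forall_arcRel_succ (fun i => v (-i)) fun i => by
    simpa only [sub_add_cancel, neg_add'] using h (-i - 1)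

theorem ARmem_empty {A : Set (V × V)} (hA : AcyclicArcs A) : ARmem A ∅ :=
  ⟨Set.empty_subset A, by simpa [reorient] using hA⟩

-- `φ` weakly decreases along every arc of the reorientation and strictly along reversed ones,
-- so a directed cycle would have constant `φ` and consist of arcs of `A`.
theorem ARmem_of_potential {β : Type*} [LinearOrder β] {A : Set (V × V)} (hA : AcyclicArcs A)
    (φ : V → β) : ARmem A {a ∈ A | φ a.1 < φ a.2} := by
  refine ⟨fun a ha => ha.1, fun x hx => ?_⟩
  have step : ∀ {a b}, ArcRel (reorient A {a ∈ A | φ a.1 < φ a.2}) a b →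
      φ b < φ a ∨ (φ b = φ a ∧ ArcRel A a b) := by
    rintro a b (⟨hab, hlt⟩ | ⟨⟨c, d⟩, ⟨-, hcd⟩, ⟨⟩⟩)
    · exact (not_lt.1 fun h => hlt ⟨hab, h⟩).lt_or_eq.imp_right (⟨·, hab⟩)
    · exact .inl hcd
  have key : ∀ {a b}, TransGen (ArcRel (reorient A {a ∈ A | φ a.1 < φ a.2})) a b →
      φ b < φ a ∨ (φ b = φ a ∧ TransGen (ArcRel A) a b) := by
    intro a b h
    induction h with
    | single h => exact (step h).imp_right fun ⟨e, h⟩ => ⟨e, .single h⟩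
    | tail _ h ih =>
      rcases step h with h₁ | ⟨e₁, h₁⟩ <;> rcases ih with h₂ | ⟨e₂, h₂⟩
      · exact .inl (h₁.trans h₂)
      · exact .inl (e₂ ▸ h₁)
      · exact .inl (e₁ ▸ h₂)
      · exact .inr ⟨e₁.trans e₂, h₂.tail h₁⟩
  rcases key hx with h | ⟨-, h⟩
  · exact lt_irrefl _ h
  · exact hA x h

theorem not_reflTransGen_diff_of_mem_transRed {E : Set (V × V)} {x y : V}
    (hxy : (x, y) ∈ transRed E) (hne : x ≠ y) : ¬ ReflTransGen (ArcRel (E \ {(x, y)})) x y := by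
  intro h
  obtain ⟨c, hxc, hcy⟩ :=
    TransGen.head'_iff.1 ((reflTransGen_iff_eq_or_transGen.1 h).resolve_left hne.symm)
  have hcy' : y ≠ c := by rintro rfl; exact hxc.2 rfl
  exact hxy.2 ⟨c, hxc.1,
    TransGen.mono (fun _ _ h => h.1) _ _ ((reflTransGen_iff_eq_or_transGen.1 hcy).resolve_left hcy')⟩

theorem ARmem_singleton_of_mem_transRed {A : Set (V × V)} (hA : IsDAG A) {f : V × V}
    (hf : f ∈ transRed A) : ARmem A {f} := by
  obtain ⟨x, y⟩ := f
  refine ⟨Set.singleton_subset_iff.2 hf.1, fun a ha => ?_⟩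
  set r := ArcRel (A \ {(x, y)})
  have step : ∀ {a b}, ArcRel (reorient A {(x, y)}) a b → r a b ∨ (a = y ∧ b = x) := by
    rintro a b (h | ⟨_, rfl, ⟨⟩⟩)
    · exact .inl h
    · exact .inr ⟨rfl, rfl⟩
  have key : ∀ {a b}, TransGen (ArcRel (reorient A {(x, y)})) a b →
      TransGen r a b ∨ (ReflTransGen r a y ∧ ReflTransGen r x b) := by
    intro a b h
    induction h with
    | single h =>
      rcases step h with h | ⟨rfl, rfl⟩
      · exact .inl (.single h)
      · exact .inr ⟨.refl, .refl⟩
    | tail _ h ih =>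
      rcases step h with h | ⟨rfl, rfl⟩
      · exact ih.imp (·.tail h) fun ⟨h₁, h₂⟩ => ⟨h₁, h₂.tail h⟩
      · exact .inr ⟨ih.elim (·.to_reflTransGen) (·.1), .refl⟩
  rcases key ha with h | ⟨h₁, h₂⟩
  · exact hA.2.2 a (TransGen.mono (fun _ _ h => h.1) _ _ h)
  · exact not_reflTransGen_diff_of_mem_transRed hf (hA.1 _ hf.1) (h₂.trans h₁)

theorem Fin.add_natCast_ne_self {n m : ℕ} [NeZero n] (a : Fin n) (h₀ : 0 < m) (h : m < n) :
    a + m ≠ a := by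
  rw [Ne, add_eq_left, Fin.natCast_eq_zero]
  exact fun hd => (Nat.le_of_dvd h₀ hd).not_gt h

theorem notMem_transRed_of_forall_ne {E : Set (V × V)} {n : ℕ} [NeZero n] (hn : 3 ≤ n)
    (v : Fin n → V) (j : Fin n) (h : ∀ i ≠ j, ArcRel E (v i) (v (i + 1))) :
    (v (j + 1), v j) ∉ transRed E := by
  refine fun hmem => hmem.2 ⟨v (j + 1 + 1), h _ ?_, ?_⟩
  · simpa using j.add_natCast_ne_self (m := 1) one_pos (by omega)
  · have hpath := transGen_arcRel_of_forall_lt v (j + 1 + 1) (m := n - 2) (by omega)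
      fun t ht => h _ (by
        rw [show j + 1 + 1 + (t : Fin n) = j + ((t + 2 : ℕ) : Fin n) by push_cast; ring]
        exact j.add_natCast_ne_self (by omega) (by omega))
    have hj : j + 1 + 1 + ((n - 2 : ℕ) : Fin n) = j := by
      rw [Nat.cast_sub (by omega), Fin.natCast_self]
      ring
    rwa [hj] at hpath

theorem exists_ARmem_reversing_cycle_except {A : Set (V × V)} (hA : AcyclicArcs A) {n : ℕ}
    [NeZero n] {v : Fin n → V} (hv : Injective v) (j : Fin n) :
    ∃ B, ARmem A B ∧ ∀ i ≠ j,
      ((v i, v (i + 1)) ∈ A → (v i, v (i + 1)) ∈ B) ∧ (v (i + 1), v i) ∉ B := by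
  obtain ⟨m, rfl⟩ : ∃ m, n = m + 1 := Nat.exists_eq_add_one.2 (NeZero.pos n)
  -- the potential is the position along the cycle, counted from `v (j + 1)`
  let φ : V → Fin (m + 1) := fun x => invFun v x - (j + 1)
  have hφ : ∀ i ≠ j, φ (v i) < φ (v (i + 1)) := by
    intro i hi
    simp only [φ, leftInverse_invFun hv _]
    rw [show i + 1 - (j + 1) = i - j by ring, show i - (j + 1) = i - j - 1 by ring]
    exact Fin.sub_one_lt_iff.2 (pos_iff_ne_zero.2 (sub_ne_zero.2 hi))
  exact ⟨_, ARmem_of_potential hA φ, fun i hi =>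
    ⟨fun h => ⟨h, hφ i hi⟩, fun h => (hφ i hi).not_gt h.2⟩⟩

end Arcs

theorem stmt_1_general {V : Type*} (A : Set (V × V)) (hA : IsDAG A)
    (hlat : (∀ x y : ARP A, ∃ z : ARP A, IsLUB {x, y} z) ∧
      (∀ x y : ARP A, ∃ z : ARP A, IsGLB {x, y} z)) :
    IsForestArcs (transRed A) := by
  by_contra hcyc
  obtain ⟨k, v, hv, hadj⟩ := SimpleGraph.exists_injective_cycle_of_not_isAcyclic hcyc
  replace hadj (i) : (v i, v (i + 1)) ∈ transRed A ∨ (v (i + 1), v i) ∈ transRed A :=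
    (hadj i).2
  have htwo (j) (hj : (v j, v (j + 1)) ∉ transRed A) :
      ∃ j' ≠ j, (v j', v (j' + 1)) ∉ transRed A := by
    by_contra! h
    exact notMem_transRed_of_forall_ne (by omega) v j (fun i hi => (h i hi).1)
      ((hadj j).resolve_left hj)
  let x (i : {i // (v i, v (i + 1)) ∈ transRed A}) : ARP A :=
    ⟨{(v i, v (i + 1))}, ARmem_singleton_of_mem_transRed hA i.2⟩
  obtain ⟨z, hz⟩ := exists_isLUB_of_finite hlat.1 (b := ⟨∅, ARmem_empty hA.2.2⟩)
    (fun B => Set.empty_subset B.1) (Set.finite_range x)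
  have hfwd (i) (hi : (v i, v (i + 1)) ∈ transRed A) : (v i, v (i + 1)) ∈ z.1 :=
    hz.1 ⟨⟨i, hi⟩, rfl⟩ rfl
  have hbwd (j) (hj : (v j, v (j + 1)) ∉ transRed A) : (v (j + 1), v j) ∉ z.1 := by
    obtain ⟨j', hj'j, hj'⟩ := htwo j hj
    obtain ⟨B, hB, hBv⟩ := exists_ARmem_reversing_cycle_except hA.2.2 hv j'
    have hzB : z ≤ ⟨B, hB⟩ := hz.2 <| Set.forall_mem_range.2 fun i =>
      Set.singleton_subset_iff.2 ((hBv i fun h => hj' (h ▸ i.2)).1 i.2.1)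
    exact fun h => (hBv j hj'j.symm).2 (hzB h)
  refine z.2.2.not_forall_arcRel_pred v fun i => ?_
  by_cases hi : (v i, v (i + 1)) ∈ transRed A
  · exact .inr ⟨_, hfwd i hi, rfl⟩
  · exact .inl ⟨((hadj i).resolve_left hi).1, hbwd i hi⟩

/-- If the acyclic reorientation poset is a lattice, then the
transitive reduction of `D` is a forest. -/
theorem stmt_1 {V : Type*} [Fintype V] (A : Set (V × V)) (hA : IsDAG A)
    (hlat : (∀ x y : ARP A, ∃ z : ARP A, IsLUB {x, y} z) ∧
      (∀ x y : ARP A, ∃ z : ARP A, IsGLB {x, y} z)) :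
    IsForestArcs (transRed A) :=
  stmt_1_general A hA hlat
end

section
/- Let D = (V, A) be a vertebrate directed acyclic graph. A subset B ⊆ A is biclosed if and only if the reoriented graph E_B is acyclic, i.e., B ∈ AR(D). -/
def inducedArcs {V : Type*} (A : Set (V × V)) (U : Set V) : Set (V × V) :=
  {a ∈ A | a.1 ∈ U ∧ a.2 ∈ U}

/-- The transitive reduction of any induced subgraph is a forest. -/
def Vertebrate {V : Type*} (A : Set (V × V)) : Prop :=
  ∀ U : Set V, IsForestArcs (transRed (inducedArcs A U))

/-- `B` is closed in `A`: every arc of `A` whose endpoints are joined by a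
directed path all of whose arcs belong to `B` itself belongs to `B`. -/
def ClosedIn {V : Type*} (A B : Set (V × V)) : Prop :=
  ∀ a ∈ A, Relation.TransGen (ArcRel B) a.1 a.2 → a ∈ B

/-! Acyclic reorientations are biclosed: an arc outside `B` spanned by a `B`-path, or an arc of `B`
spanned by an `(A \ B)`-path, closes a directed cycle of `E_B`.

Conversely, a shortest directed cycle of `E_B` is chordless, so every arc of `A` between its
vertices is one of its steps: traversed forwards if it lies outside `B`, backwards if it lies in
`B`. Two consecutive such arcs are of the same kind, since otherwise they form a 2-cycle of `A`.
Hence a path of length at least 2 in the subgraph induced on the cycle lies entirely in `B` or in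
`A \ B`; by biclosedness its shortcut arc is of the same kind as the path's first arc, so both are
the cycle step out of the same vertex, and the rest of the path is a directed cycle of `A`. So the
induced subgraph is its own transitive reduction, and its underlying graph contains the cycle,
which contradicts vertebracy. -/

open Relation

section

variable {V : Type*}

namespace Relation

theorem TransGen.and_of_head {r p : V → V → Prop}
    (hp : ∀ x y z, r x y → r y z → p x y → p y z) {a b c : V} (hab : r a b) (ha : p a b)
    (hbc : TransGen r b c) : TransGen (fun x y => r x y ∧ p x y) a c := by
  induction hbc using TransGen.head_induction_on generalizing a with
  | single hbc => exact .head ⟨hab, ha⟩ (.single ⟨hbc, hp _ _ _ hab hbc ha⟩)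
  | head hbb' _ ih => exact .head ⟨hab, ha⟩ (ih hbb' (hp _ _ _ hab hbb' ha))

end Relation

def IsClosedWalk (R : V → V → Prop) {n : ℕ} (f : Fin (n + 1) → V) : Prop :=
  ∀ i, R (f i) (f (i + 1))

def IsChordlessCycle (R : V → V → Prop) {n : ℕ} (f : Fin (n + 1) → V) : Prop :=
  ∀ i j, R (f i) (f j) ↔ j = i + 1

theorem exists_walk_of_transGen {R : V → V → Prop} {a b : V} (h : TransGen R a b) :
    ∃ (n : ℕ) (f : Fin (n + 1) → V),
      R a (f 0) ∧ f (Fin.last n) = b ∧ ∀ i : Fin n, R (f i.castSucc) (f i.succ) := by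
  induction h with
  | single hab => exact ⟨0, fun _ => _, hab, rfl, fun i => i.elim0⟩
  | tail _ hbc ih =>
    obtain ⟨n, f, h0, hlast, hstep⟩ := ih
    refine ⟨n + 1, Fin.snoc f _, by simpa using h0, Fin.snoc_last .., fun i => ?_⟩
    induction i using Fin.lastCases with
    | last => simpa [hlast] using hbc
    | cast i =>
      rw [Fin.succ_castSucc, Fin.snoc_castSucc, Fin.snoc_castSucc]
      exact hstep i

theorem exists_isClosedWalk_of_transGen {R : V → V → Prop} {v : V} (h : TransGen R v v) :
    ∃ (n : ℕ) (f : Fin (n + 1) → V), IsClosedWalk R f := by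
  obtain ⟨n, f, h0, hlast, hstep⟩ := exists_walk_of_transGen h
  refine ⟨n, f, fun i => ?_⟩
  induction i using Fin.lastCases with
  | last => rwa [Fin.last_add_one, hlast]
  | cast i => rw [Fin.coeSucc_eq_succ]; exact hstep i

open Fin.NatCast in
/-- A chord `f i → f j` shortcuts the closed walk `f` to `f j → ⋯ → f i → f j`. -/
theorem IsClosedWalk.exists_shorter {R : V → V → Prop} {n : ℕ} {f : Fin (n + 1) → V}
    (hf : IsClosedWalk R f) {i j : Fin (n + 1)} (hij : R (f i) (f j)) (hj : j ≠ i + 1) :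
    ∃ m < n, ∃ g : Fin (m + 1) → V, IsClosedWalk R g := by
  have hlt : (i - j).val < n := by
    refine lt_of_le_of_ne (Nat.lt_succ_iff.mp (i - j).isLt) fun h => hj ?_
    have : i - j = Fin.last n := Fin.ext h
    rw [sub_eq_iff_eq_add] at this
    rw [this, add_right_comm, Fin.last_add_one, zero_add]
  refine ⟨(i - j).val, hlt, fun k => f (j + k.val), fun k => ?_⟩
  induction k using Fin.lastCases with
  | last =>
    simpa only [Fin.last_add_one, Fin.val_last, Fin.val_zero, Nat.cast_zero, add_zero,
      Fin.cast_val_eq_self, add_sub_cancel] using hij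
  | cast k =>
    have hval : (k.castSucc + 1 : Fin _).val = k.val + 1 := by
      rw [Fin.coeSucc_eq_succ, Fin.val_succ]
    simpa only [hval, Fin.val_castSucc, Nat.cast_succ, ← add_assoc] using hf _

theorem exists_isChordlessCycle_of_transGen {R : V → V → Prop} {v : V} (h : TransGen R v v) :
    ∃ (n : ℕ) (f : Fin (n + 1) → V), IsChordlessCycle R f := by
  classical
  have hex := exists_isClosedWalk_of_transGen h
  obtain ⟨f, hf⟩ := Nat.find_spec hex
  refine ⟨_, f, fun i j => ⟨fun hij => ?_, fun h => h ▸ hf i⟩⟩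
  by_contra hj
  obtain ⟨m, hm, hg⟩ := hf.exists_shorter hij hj
  exact Nat.find_min hex hm hg

namespace IsChordlessCycle

variable {R : V → V → Prop} {n : ℕ} {f : Fin (n + 1) → V}

theorem isClosedWalk (hf : IsChordlessCycle R f) : IsClosedWalk R f :=
  fun i => (hf i (i + 1)).mpr rfl

theorem injective (hf : IsChordlessCycle R f) : Function.Injective f := by
  intro i j hij
  have hstep : R (f (i - 1)) (f j) := hij ▸ by simpa using hf.isClosedWalk (i - 1)
  simpa using ((hf (i - 1) j).mp hstep).symm

theorem two_le (hf : IsChordlessCycle R f) (hR : ∀ {x y}, R x y → ¬ R y x) : 2 ≤ n := by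
  by_contra! hn
  interval_cases n
  · exact hR (hf.isClosedWalk 0) (hf.isClosedWalk 0)
  · exact hR (hf.isClosedWalk 0) (hf.isClosedWalk 1)

end IsChordlessCycle

theorem SimpleGraph.not_isAcyclic_of_injective_cycle {G : SimpleGraph V} {n : ℕ}
    {f : Fin (n + 1) → V} (hf : Function.Injective f) (hn : 2 ≤ n)
    (hadj : ∀ i, G.Adj (f i) (f (i + 1))) : ¬ G.IsAcyclic := by
  obtain ⟨k, rfl⟩ : ∃ k, n = k + 2 := ⟨n - 2, by omega⟩
  let φ : cycleGraph (k + 3) →g G :=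
    { toFun := f
      map_rel' := by
        rintro a b (h | h)
        · rw [sub_eq_iff_eq_add'] at h
          exact h ▸ (hadj b).symm
        · rw [sub_eq_iff_eq_add'] at h
          exact h ▸ hadj a }
  exact fun hG => hG.comap φ hf _ cycleGraph.isCycle_cycle

theorem mem_reorient_iff {A B : Set (V × V)} {x y : V} :
    (x, y) ∈ reorient A B ↔ (x, y) ∈ A \ B ∨ (y, x) ∈ B := by
  simp [reorient]

theorem reorient_asymm {A B : Set (V × V)} (hA : IsDAG A) (hB : B ⊆ A) {x y : V}
    (hxy : (x, y) ∈ reorient A B) : (y, x) ∉ reorient A B := by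
  rw [mem_reorient_iff] at hxy ⊢
  rintro (hyx | hxyB) <;> rcases hxy with hxy | hyxB
  · exact hA.2.1 _ hxy.1 hyx.1
  · exact hyx.2 hyxB
  · exact hxy.2 hxyB
  · exact hA.2.1 _ (hB hxyB) (hB hyxB)

theorem closedIn_of_acyclicArcs_reorient {A B : Set (V × V)} (h : AcyclicArcs (reorient A B)) :
    ClosedIn A B := by
  intro a ha hpath
  by_contra haB
  have hback : TransGen (ArcRel (reorient A B)) a.2 a.1 :=
    TransGen.mono (fun x y hyx => Or.inr ⟨(y, x), hyx, rfl⟩) _ _ (transGen_swap.mpr hpath)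
  exact h a.1 (hback.head (Or.inl ⟨ha, haB⟩))

theorem closedIn_diff_of_acyclicArcs_reorient {A B : Set (V × V)}
    (h : AcyclicArcs (reorient A B)) : ClosedIn A (A \ B) := by
  intro a ha hpath
  refine ⟨ha, fun haB => h a.1 ?_⟩
  exact (TransGen.mono (fun x y hxy => Or.inl hxy) _ _ hpath).tail (Or.inr ⟨a, haB, rfl⟩)

namespace IsChordlessCycle

variable {A B : Set (V × V)} {n : ℕ} {f : Fin (n + 1) → V}

theorem eq_add_one_of_mem_diff (hf : IsChordlessCycle (ArcRel (reorient A B)) f)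
    {i j : Fin (n + 1)} (h : (f i, f j) ∈ A \ B) : j = i + 1 :=
  (hf i j).mp (Or.inl h)

theorem eq_add_one_of_mem (hf : IsChordlessCycle (ArcRel (reorient A B)) f)
    {i j : Fin (n + 1)} (h : (f i, f j) ∈ B) : i = j + 1 :=
  (hf j i).mp (Or.inr ⟨_, h, rfl⟩)

theorem mem_iff_mem_of_consecutive (hA : IsDAG A)
    (hf : IsChordlessCycle (ArcRel (reorient A B)) f) {x y z : V}
    (hxy : (x, y) ∈ inducedArcs A (Set.range f)) (hyz : (y, z) ∈ inducedArcs A (Set.range f)) :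
    (x, y) ∈ B ↔ (y, z) ∈ B := by
  obtain ⟨hxy, ⟨i, rfl⟩, ⟨j, rfl⟩⟩ := hxy
  obtain ⟨hyz, -, ⟨k, rfl⟩⟩ := hyz
  have hik : i ≠ k := fun h => hA.2.1 _ hxy (h ▸ hyz)
  constructor
  · intro h₁
    by_contra h₂
    exact hik ((hf.eq_add_one_of_mem h₁).trans (hf.eq_add_one_of_mem_diff ⟨hyz, h₂⟩).symm)
  · intro h₂
    by_contra h₁
    exact hik (add_right_cancel
      ((hf.eq_add_one_of_mem_diff ⟨hxy, h₁⟩).symm.trans (hf.eq_add_one_of_mem h₂)))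

theorem eq_of_mem_iff_mem (hf : IsChordlessCycle (ArcRel (reorient A B)) f) {x y z : V}
    (hxy : (x, y) ∈ inducedArcs A (Set.range f)) (hxz : (x, z) ∈ inducedArcs A (Set.range f))
    (hB : (x, y) ∈ B ↔ (x, z) ∈ B) : y = z := by
  obtain ⟨hxy, ⟨i, rfl⟩, ⟨j, rfl⟩⟩ := hxy
  obtain ⟨hxz, -, ⟨k, rfl⟩⟩ := hxz
  congr 1
  by_cases h : (f i, f j) ∈ B
  · exact add_right_cancel ((hf.eq_add_one_of_mem h).symm.trans (hf.eq_add_one_of_mem (hB.mp h)))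
  · exact (hf.eq_add_one_of_mem_diff ⟨hxy, h⟩).trans
      (hf.eq_add_one_of_mem_diff ⟨hxz, mt hB.mpr h⟩).symm

theorem inducedArcs_subset_transRed (hA : IsDAG A) (hcl : ClosedIn A B)
    (hcoc : ClosedIn A (A \ B)) (hf : IsChordlessCycle (ArcRel (reorient A B)) f) :
    inducedArcs A (Set.range f) ⊆ transRed (inducedArcs A (Set.range f)) := by
  rintro ⟨u, v⟩ huv
  refine ⟨huv, fun ⟨w, huw, hwv⟩ => ?_⟩
  have hpath : TransGen (fun x y => ArcRel (inducedArcs A (Set.range f)) x y ∧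
      ((x, y) ∈ B ↔ (u, w) ∈ B)) u v :=
    TransGen.and_of_head (r := ArcRel (inducedArcs A (Set.range f)))
      (fun x y z hxy hyz h => (hf.mem_iff_mem_of_consecutive hA hxy hyz).symm.trans h)
      huw Iff.rfl hwv
  have huvB : (u, w) ∈ B ↔ (u, v) ∈ B := by
    by_cases h : (u, w) ∈ B
    · simpa [h] using hcl _ huv.1 (TransGen.mono (fun x y hxy => hxy.2.mpr h) _ _ hpath)
    · have hdiff : TransGen (ArcRel (A \ B)) u v :=
        TransGen.mono (fun x y hxy => ⟨hxy.1.1, mt hxy.2.mp h⟩) _ _ hpath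
      simpa [h] using (hcoc _ huv.1 hdiff).2
  obtain rfl := hf.eq_of_mem_iff_mem huw huv huvB
  exact hA.2.2 w (TransGen.mono (fun x y hxy => hxy.1) _ _ hwv)

theorem adj_undirectedGraph_transRed (hA : IsDAG A) (hB : B ⊆ A) (hcl : ClosedIn A B)
    (hcoc : ClosedIn A (A \ B)) (hf : IsChordlessCycle (ArcRel (reorient A B)) f)
    (i : Fin (n + 1)) :
    (undirectedGraph (transRed (inducedArcs A (Set.range f)))).Adj (f i) (f (i + 1)) := by
  have hstep := hf.isClosedWalk i
  have hsub := hf.inducedArcs_subset_transRed hA hcl hcoc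
  refine (SimpleGraph.fromRel_adj _ _ _).mpr
    ⟨fun h => reorient_asymm hA hB hstep (by rw [← h] at hstep ⊢; exact hstep), ?_⟩
  rcases mem_reorient_iff.mp hstep with h | h
  · exact Or.inl (hsub ⟨h.1, ⟨i, rfl⟩, ⟨i + 1, rfl⟩⟩)
  · exact Or.inr (hsub ⟨hB h, ⟨i + 1, rfl⟩, ⟨i, rfl⟩⟩)

end IsChordlessCycle

end

theorem stmt_2_general {V : Type*} (A : Set (V × V)) (hA : IsDAG A)
    (hV : Vertebrate A) (B : Set (V × V)) (hB : B ⊆ A) :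
    (ClosedIn A B ∧ ClosedIn A (A \ B)) ↔ ARmem A B := by
  refine ⟨fun ⟨hcl, hcoc⟩ => ⟨hB, fun v hv => ?_⟩, fun ⟨_, hac⟩ =>
    ⟨closedIn_of_acyclicArcs_reorient hac, closedIn_diff_of_acyclicArcs_reorient hac⟩⟩
  obtain ⟨n, f, hf⟩ := exists_isChordlessCycle_of_transGen hv
  exact SimpleGraph.not_isAcyclic_of_injective_cycle hf.injective
    (hf.two_le (reorient_asymm hA hB)) (hf.adj_undirectedGraph_transRed hA hB hcl hcoc)
    (hV (Set.range f))

/-- For a vertebrate directed acyclic graph, a subset `B ⊆ A`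
is biclosed if and only if the reorientation `E_B` is acyclic. -/
theorem stmt_2 {V : Type*} [Fintype V] (A : Set (V × V)) (hA : IsDAG A)
    (hV : Vertebrate A) (B : Set (V × V)) (hB : B ⊆ A) :
    (ClosedIn A B ∧ ClosedIn A (A \ B)) ↔ ARmem A B :=
  stmt_2_general A hA hV B hB
end

section
/- Let D = (V, A) be a vertebrate directed acyclic graph and let B_1, …, B_k ∈ AR(D) with k ≥ 1. Then the set B_∨ = {(u,v) ∈ A : there is a directed path from u to v all of whose arcs belong to B_1 ∪ … ∪ B_k} belongs to AR(D) and is the least upper bound of {B_1, …, B_k} in AR(D); dually, the set B_∧ = A ∖ {(u,v) ∈ A : there is a directed path from u to v all of whose arcs belong to (A ∖ B_1) ∪ … ∪ (A ∖ B_k)} belongs to AR(D) and is the greatest lower bound of {B_1, …, B_k} in AR(D). -/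
/-- The candidate join: arcs of `A` whose endpoints are joined by a directed path
all of whose arcs are reversed in at least one of the reorientations. -/
def joinSet {V : Type*} (A : Set (V × V)) {k : ℕ} (B : Fin k → ARP A) : Set (V × V) :=
  {a ∈ A | Relation.TransGen (fun x y => ∃ i : Fin k, (x, y) ∈ (B i).1) a.1 a.2}

/-- The candidate meet: complement in `A` of the arcs of `A` whose endpoints are
joined by a directed path all of whose arcs are unreversed in at least one of the
reorientations. -/
def meetSet {V : Type*} (A : Set (V × V)) {k : ℕ} (B : Fin k → ARP A) : Set (V × V) :=
  A \ {a ∈ A | Relation.TransGen (fun x y => ∃ i : Fin k, (x, y) ∈ A \ (B i).1) a.1 a.2}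


/-!
The meet is the join of the complementary reversal sets, complemented, and both bound properties
follow from the fact that the reversal set of an acyclic reorientation contains every arc of `A`
whose endpoints it joins by a path. The real content is that the candidate join is acyclic.

A cycle of that reorientation gives a cycle of `joinStep A R`: forward arcs not on an `R`-path and
reversed arcs of `R`. Take a counterexample on a minimal vertex set and a shortest cycle there:
it runs through every vertex once and has no chord, so every `joinStep` arc is a cycle arc. As the
transitive reduction of `A` is a forest, the arc `(u, v)` of `A` underlying some cycle arc has a
detour `u → z → ⋯ → v` in `A`. Follow the detour along the cycle. If `(u, v)` stays forward, every
other cycle arc must be a reversed arc of `R`, so `R` joins `u` to `v`: a contradiction. If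
`(u, v)` is reversed, every other cycle arc is a forward arc off `R`, and an acyclic reorientation
`B ⊆ R` reversing `(u, v)` contains the whole cycle.
-/

open Relation Function

section

variable {V : Type*}

def IsCyclicWalk (r : V → V → Prop) (c : ℕ → V) (n : ℕ) : Prop :=
  0 < n ∧ Periodic c n ∧ ∀ t, r (c t) (c (t + 1))

theorem Function.Periodic.exists_lt_add_eq {c : ℕ → V} {n : ℕ} (hc : Periodic c n) (hn : 0 < n)
    (j t₀ : ℕ) : ∃ i < n, c (t₀ + i) = c j := by
  have hshift : Periodic (fun k => c (t₀ + k)) n := fun k => by simp only [← add_assoc, hc _]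
  have hle : t₀ ≤ j + t₀ * n := le_add_left (Nat.le_mul_of_pos_right t₀ hn)
  refine ⟨(j + t₀ * n - t₀) % n, Nat.mod_lt _ hn, ?_⟩
  rw [hshift.map_mod_nat, Nat.add_sub_cancel' hle]
  simpa using hc.nat_mul t₀ j

namespace IsCyclicWalk

variable {r : V → V → Prop}

theorem of_closed {w : ℕ → V} {n : ℕ} (hn : 0 < n) (hclosed : w n = w 0)
    (hw : ∀ i < n, r (w i) (w (i + 1))) : IsCyclicWalk r (fun t => w (t % n)) n := by
  refine ⟨hn, fun t => by simp, fun t => ?_⟩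
  have ht := Nat.mod_lt t hn
  show r (w (t % n)) (w ((t + 1) % n))
  rw [← Nat.mod_add_mod t n 1]
  rcases (Nat.add_one_le_of_lt ht).lt_or_eq with hlt | heq
  · rw [Nat.mod_eq_of_lt hlt]
    exact hw _ ht
  · have h := hw _ ht
    rw [heq, hclosed] at h
    rwa [heq, Nat.mod_self]

theorem exists_of_transGen {v : V} (h : TransGen r v v) : ∃ c n, IsCyclicWalk r c n := by
  suffices ∀ {a b}, TransGen r a b →
      ∃ n > 0, ∃ w : ℕ → V, w 0 = a ∧ w n = b ∧ ∀ i < n, r (w i) (w (i + 1)) by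
    obtain ⟨n, hn, w, h0, hn', hw⟩ := this h
    exact ⟨_, n, of_closed hn (hn'.trans h0.symm) hw⟩
  intro a b hab
  induction hab using TransGen.head_induction_on with
  | single hab => exact ⟨1, one_pos, fun | 0 => _ | _ + 1 => b, rfl, rfl, by simpa⟩
  | @head a a' haa' _ ih =>
    obtain ⟨n, -, w, h0, hn, hw⟩ := ih
    refine ⟨n + 1, n.succ_pos, fun | 0 => a | i + 1 => w i, rfl, hn, ?_⟩
    rintro (_ | i) hi
    · simpa [h0] using haa'
    · exact hw i (by omega)

theorem exists_shortest {c : ℕ → V} {n : ℕ} (hc : IsCyclicWalk r c n) :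
    ∃ c n, IsCyclicWalk r c n ∧ ∀ c' m, IsCyclicWalk r c' m → n ≤ m := by
  classical
  have hex : ∃ n, ∃ c, IsCyclicWalk r c n := ⟨n, c, hc⟩
  obtain ⟨c₀, hc₀⟩ := Nat.find_spec hex
  exact ⟨c₀, _, hc₀, fun c' m hc' => Nat.find_min' hex ⟨c', hc'⟩⟩

variable {c : ℕ → V} {n : ℕ} (hc : IsCyclicWalk r c n)
  (hmin : ∀ c' m, IsCyclicWalk r c' m → n ≤ m)
include hc hmin

theorem le_sub_of_eq {s t : ℕ} (hst : s < t) (heq : c s = c t) : n ≤ t - s :=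
  hmin _ _ <| of_closed (w := fun i => c (s + i)) (by omega)
    (by rw [Nat.add_sub_cancel' hst.le, heq.symm, add_zero]) fun i _ => hc.2.2 (s + i)

theorem eq_succ_of_rel {s : ℕ} {b : V} (hb : r (c s) b) (hbc : ∃ j, c j = b) : b = c (s + 1) := by
  obtain ⟨j, rfl⟩ := hbc
  obtain ⟨i, hi, hij⟩ := hc.2.1.exists_lt_add_eq hc.1 j (s + 1)
  rcases Nat.eq_zero_or_pos i with rfl | hi0
  · exact hij.symm
  · have hshort := hmin _ _ <| of_closed (w := fun k => if k = 0 then c s else c (s + i + k))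
      (n := n - i) (by omega) (by simp [show s + i + (n - i) = s + n by omega, hc.2.1 s])
      (by
        rintro (_ | k) _
        · simpa [← hij, add_right_comm s 1 i] using hb
        · simpa [← add_assoc] using hc.2.2 (s + i + (k + 1)))
    omega

theorem shift_injective (t : ℕ) {i j : ℕ} (hi : i < n) (hj : j < n)
    (h : c (t + i) = c (t + j)) : i = j := by
  by_contra hne
  rcases Nat.lt_or_gt_of_ne hne with hij | hij
  · have := hc.le_sub_of_eq hmin (by omega : t + i < t + j) h; omega
  · have := hc.le_sub_of_eq hmin (by omega : t + j < t + i) h.symm; omega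

theorem exists_shift_of_rel (t : ℕ) {a b : V} (hab : r a b) (ha : ∃ s, c s = a)
    (hb : ∃ s, c s = b) : ∃ i < n, a = c (t + i) ∧ b = c (t + (i + 1)) := by
  obtain ⟨s, rfl⟩ := ha
  obtain ⟨i, hi, his⟩ := hc.2.1.exists_lt_add_eq hc.1 s t
  rw [← his] at hab ⊢
  exact ⟨i, hi, rfl, hc.eq_succ_of_rel hmin hab hb⟩

end IsCyclicWalk

section Arcs

variable {A B : Set (V × V)}

theorem AcyclicArcs.mono (hA : AcyclicArcs A) (hBA : B ⊆ A) : AcyclicArcs B :=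
  fun v hv => hA v (TransGen.mono (fun _ _ h => hBA h) _ _ hv)

theorem AcyclicArcs.ne {a b : V} (hA : AcyclicArcs A) (hab : (a, b) ∈ A) : a ≠ b := by
  rintro rfl
  exact hA a (.single hab)

theorem AcyclicArcs.swap_notMem {a b : V} (hA : AcyclicArcs A) (hab : (a, b) ∈ A) :
    (b, a) ∉ A :=
  fun hba => hA a (.tail (.single hab) hba)

theorem AcyclicArcs.image_swap (hA : AcyclicArcs A) : AcyclicArcs (Prod.swap '' A) := by
  intro v hv
  refine hA v (transGen_swap.mp (TransGen.mono ?_ _ _ hv))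
  rintro a b ⟨⟨b', a'⟩, hab, h⟩
  cases h
  exact hab

theorem reorient_diff (hBA : B ⊆ A) : reorient A (A \ B) = Prod.swap '' reorient A B := by
  rw [reorient, reorient, Set.image_union, Set.sdiff_sdiff_cancel_left hBA, Set.image_image,
    Set.union_comm]
  simp

theorem ARmem.diff (hB : ARmem A B) : ARmem A (A \ B) :=
  ⟨sdiff_le, by rw [reorient_diff hB.1]; exact hB.2.image_swap⟩

theorem ARmem.mem_of_transGen (hB : ARmem A B) {a b : V} (hab : (a, b) ∈ A)
    (hpath : TransGen (ArcRel B) a b) : (a, b) ∈ B := by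
  by_contra hnot
  refine hB.2 a (.head (Or.inl ⟨hab, hnot⟩) (transGen_swap.mp (TransGen.mono ?_ _ _ hpath)))
  exact fun x y hxy => Or.inr ⟨(x, y), hxy, rfl⟩

theorem inducedArcs_subset (U : Set V) : inducedArcs A U ⊆ A := fun _ h => h.1

theorem inducedArcs_inducedArcs {S U : Set V} (hSU : S ⊆ U) :
    inducedArcs (inducedArcs A U) S = inducedArcs A S := by
  ext p
  simp only [inducedArcs, Set.mem_sep_iff]
  exact ⟨fun h => ⟨h.1.1, h.2⟩, fun h => ⟨⟨h.1, hSU h.2.1, hSU h.2.2⟩, h.2⟩⟩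

theorem ARmem.inducedArcs (hB : ARmem A B) (U : Set V) :
    ARmem (inducedArcs A U) (inducedArcs B U) := by
  refine ⟨fun p hp => ⟨hB.1 hp.1, hp.2⟩, hB.2.mono ?_⟩
  rintro p (⟨hpA, hpB⟩ | ⟨q, hq, rfl⟩)
  · exact Or.inl ⟨hpA.1, fun h => hpB ⟨h, hpA.2⟩⟩
  · exact Or.inr ⟨q, hq.1, rfl⟩

theorem exists_detour_of_not_adj {a b : V} (hA : AcyclicArcs A) (hab : (a, b) ∈ A)
    (hadj : ¬(undirectedGraph (transRed A)).Adj a b) :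
    ∃ z, (a, z) ∈ A ∧ TransGen (ArcRel A) z b := by
  by_contra! h
  exact hadj ⟨hA.ne hab, Or.inl ⟨hab, fun ⟨z, haz, hzb⟩ => h z haz hzb⟩⟩

end Arcs

theorem SimpleGraph.IsAcyclic.exists_not_adj {G : SimpleGraph V} (hG : G.IsAcyclic) {c : ℕ → V}
    {n : ℕ} (hn : 3 ≤ n) (hc : Periodic c n) (hrep : ∀ s t, s < t → c s = c t → n ≤ t - s) :
    ∃ t, ¬G.Adj (c t) (c (t + 1)) := by
  obtain ⟨k, rfl⟩ : ∃ k, n = k + 3 := ⟨n - 3, by omega⟩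
  by_contra! hadj
  have hf : ∀ a b : Fin (k + 3), (cycleGraph (k + 3)).Adj a b → G.Adj (c a) (c b) := by
    have hsucc : ∀ b : Fin (k + 3), G.Adj (c ↑(b + 1)) (c b) := fun b => by
      rw [Fin.val_add, Fin.val_one, hc.map_mod_nat]
      exact (hadj b).symm
    rintro a b (h | h) <;> rw [sub_eq_iff_eq_add'] at h <;> subst h
    exacts [hsucc b, (hsucc a).symm]
  have hinj : Injective fun a : Fin (k + 3) => c a := by
    intro a b hab
    by_contra hne
    rcases Fin.lt_or_lt_of_ne hne with h | h
    · have := hrep _ _ h hab; omega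
    · have := hrep _ _ h hab.symm; omega
  exact isAcyclic_iff_free_cycleGraph.mp hG (k + 3) hn ⟨Hom.toCopy ⟨_, hf _ _⟩ hinj⟩

def CoveredByAR (A R : Set (V × V)) : Prop :=
  ∀ p ∈ R, ∃ B, ARmem A B ∧ p ∈ B ∧ B ⊆ R

def joinArcs (A R : Set (V × V)) : Set (V × V) :=
  {a ∈ A | TransGen (ArcRel R) a.1 a.2}

/-- The arcs of `reorient A (joinArcs A R)`, with each reversed arc replaced by the reversed
`R`-path that puts it into `joinArcs A R`. -/
def joinStep (A R : Set (V × V)) (a b : V) : Prop :=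
  ((a, b) ∈ A ∧ ¬TransGen (ArcRel R) a b) ∨ (b, a) ∈ R

section JoinStep

variable {A R : Set (V × V)}

theorem CoveredByAR.subset (hR : CoveredByAR A R) : R ⊆ A := fun p hp =>
  let ⟨_, hB, hpB, _⟩ := hR p hp
  hB.1 hpB

theorem CoveredByAR.inducedArcs (hR : CoveredByAR A R) (U : Set V) :
    CoveredByAR (inducedArcs A U) (inducedArcs R U) := by
  rintro p ⟨hpR, hpU⟩
  obtain ⟨B, hB, hpB, hBR⟩ := hR p hpR
  exact ⟨_, hB.inducedArcs U, ⟨hpB, hpU⟩, fun q hq => ⟨hBR hq.1, hq.2⟩⟩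

theorem joinStep.mem_or_swap_mem (hRA : R ⊆ A) {a b : V} (h : joinStep A R a b) :
    (a, b) ∈ A ∨ (b, a) ∈ A :=
  h.imp And.left fun h => hRA h

theorem joinStep.asymm (hA : AcyclicArcs A) (hRA : R ⊆ A) {a b : V} (hab : joinStep A R a b) :
    ¬joinStep A R b a := by
  rcases hab with ⟨hab, hnR⟩ | hbaR <;> rintro (⟨hba, hnR'⟩ | habR)
  · exact hA.swap_notMem hab hba
  · exact hnR (.single habR)
  · exact hnR' (.single hbaR)
  · exact hA.swap_notMem (hRA hbaR) (hRA habR)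

theorem joinStep.inducedArcs {a b : V} {U : Set V} (h : joinStep A R a b) (ha : a ∈ U)
    (hb : b ∈ U) : joinStep (inducedArcs A U) (inducedArcs R U) a b := by
  refine h.imp (fun ⟨hab, hnR⟩ => ⟨⟨hab, ha, hb⟩, fun hR => hnR ?_⟩) fun h => ⟨h, hb, ha⟩
  exact TransGen.mono (fun _ _ h => h.1) _ _ hR

theorem transGen_joinStep_of_reorient {a b : V} (h : ArcRel (reorient A (joinArcs A R)) a b) :
    TransGen (joinStep A R) a b := by
  rcases h with ⟨hab, hnJ⟩ | ⟨⟨b', a'⟩, ⟨-, hpath⟩, h⟩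
  · exact .single (Or.inl ⟨hab, fun hR => hnJ ⟨hab, hR⟩⟩)
  · cases h
    exact transGen_swap.mp (TransGen.mono (fun _ _ h => Or.inr h) _ _ hpath)

end JoinStep

theorem transGen_descends {r : V → V → Prop} {p : V → Prop} {x : ℕ → V} {m : ℕ}
    (hinj : ∀ i j, i ≤ m → j ≤ m → x i = x j → i = j)
    (hstep : ∀ a b, r a b → p a → ∃ i < m, a = x (i + 1) ∧ b = x i)
    (hp : ∀ a b, r a b → p a → p b) {a b : V} (hab : TransGen r a b) (ha : p a) :
    ∃ i ≤ m, ∃ j < i, a = x i ∧ b = x j ∧ ∀ h, j ≤ h → h < i → r (x (h + 1)) (x h) := by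
  induction hab using TransGen.head_induction_on with
  | single hab =>
    obtain ⟨i, hi, rfl, rfl⟩ := hstep _ _ hab ha
    exact ⟨i + 1, hi, i, i.lt_succ_self, rfl, rfl, fun h h₁ h₂ => by
      obtain rfl : h = i := by omega
      exact hab⟩
  | head haa' _ ih =>
    obtain ⟨i, hi, rfl, rfl⟩ := hstep _ _ haa' ha
    obtain ⟨i', hi', j, hji', hi'x, rfl, hcov⟩ := ih (hp _ _ haa' ha)
    obtain rfl := hinj _ _ hi.le hi' hi'x
    refine ⟨i + 1, hi, j, by omega, rfl, rfl, fun h h₁ h₂ => ?_⟩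
    rcases (Nat.lt_succ_iff.mp h₂).lt_or_eq with h₂ | rfl
    exacts [hcov h h₁ h₂, haa']

/-! `x 0, …, x m, x (m + 1) = x 0` is a chordless hamiltonian cycle of `joinStep A R`, cut open at
the arc between `x m` and `x 0`; the path of `A` through `z` is the detour of that arc. -/
section Cut

variable {A R : Set (V × V)} {x : ℕ → V} {m : ℕ} (hA : AcyclicArcs A)
  (hinj : ∀ i j, i ≤ m → j ≤ m → x i = x j → i = j)
  (hsucc : ∀ a b, joinStep A R a b → ∃ i ≤ m, a = x i ∧ b = x (i + 1))
  (hclose : x (m + 1) = x 0)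
include hA hinj hsucc hclose

theorem exists_descent_of_forward_cut (hRA : R ⊆ A) (huv : (x m, x 0) ∈ A) {a b : V}
    (hab : TransGen (ArcRel R) a b) :
    ∃ i ≤ m, ∃ j < i, a = x i ∧ b = x j ∧ ∀ h, j ≤ h → h < i → (x (h + 1), x h) ∈ R := by
  refine transGen_descends (p := fun _ => True) hinj (fun a b hab _ => ?_)
    (fun _ _ _ _ => trivial) hab trivial
  obtain ⟨i, hi, rfl, rfl⟩ := hsucc b a (Or.inr hab)
  refine ⟨i, hi.lt_of_ne ?_, rfl, rfl⟩
  rintro rfl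
  exact hA.swap_notMem huv (hclose ▸ hRA hab)

theorem forward_cut_reach (hRA : R ⊆ A) (huv : (x m, x 0) ∈ A) {z b : V} (hz : (x m, z) ∈ A)
    (hzv : TransGen (ArcRel A) z (x 0)) (hb : ReflTransGen (ArcRel A) z b) :
    ∃ j ≤ m, b = x j ∧ ∀ h, j ≤ h → h < m → (x (h + 1), x h) ∈ R := by
  have hdown := fun {a b : V} (hab : TransGen (ArcRel R) a b) =>
    exists_descent_of_forward_cut hA hinj hsucc hclose hRA huv hab
  induction hb with
  | refl =>
    by_cases hR : TransGen (ArcRel R) (x m) z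
    · obtain ⟨i, hi, j, hji, him, rfl, hcov⟩ := hdown hR
      obtain rfl := hinj _ _ hi le_rfl him.symm
      exact ⟨j, hji.le, rfl, hcov⟩
    · obtain ⟨i, hi, him, rfl⟩ := hsucc _ _ (Or.inl ⟨hz, hR⟩)
      obtain rfl := hinj _ _ hi le_rfl him.symm
      exact (hA _ (hclose ▸ hzv)).elim
  | @tail b' b'' hzb' hb'b'' ih =>
    obtain ⟨j', hj', rfl, hcov'⟩ := ih
    by_cases hR : TransGen (ArcRel R) (x j') b''
    · obtain ⟨i, hi, j, hji, hij', rfl, hcov⟩ := hdown hR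
      obtain rfl := hinj _ _ hi hj' hij'.symm
      refine ⟨j, by omega, rfl, fun h h₁ h₂ => ?_⟩
      exact if hh : h < i then hcov h h₁ hh else hcov' h (by omega) h₂
    · obtain ⟨i, hi, hij', rfl⟩ := hsucc _ _ (Or.inl ⟨hb'b'', hR⟩)
      obtain rfl := hinj _ _ hi hj' hij'.symm
      rcases hi.lt_or_eq with hi | rfl
      · exact ⟨i + 1, hi, rfl, fun h h₁ h₂ => hcov' h (by omega) h₂⟩
      · exact (hA _ (.head' hz hzb')).elim

/-- The detour through `z` forces every arc of the cycle to be a reversed arc of `R`. -/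
theorem false_of_forward_cut (hRA : R ⊆ A) (huv : (x m, x 0) ∈ A)
    (hnR : ¬TransGen (ArcRel R) (x m) (x 0)) {z : V} (hz : (x m, z) ∈ A)
    (hzv : TransGen (ArcRel A) z (x 0)) : False := by
  obtain ⟨j, hj, hxj, hcov⟩ :=
    forward_cut_reach hA hinj hsucc hclose hRA huv hz hzv hzv.to_reflTransGen
  obtain rfl := hinj _ _ (Nat.zero_le _) hj hxj
  have hm : 0 < m := Nat.pos_of_ne_zero fun hm => hA.ne huv (by rw [hm])
  exact hnR <| TransGen.lift x (fun _ _ h => h) _ _ <|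
    transGen_of_succ_of_gt (fun i j => (x i, x j) ∈ R) (fun h hh => hcov h hh.1 hh.2) hm

theorem exists_descent_of_backward_cut (hRA : R ⊆ A) {a b : V} (hab : TransGen (ArcRel R) a b)
    (ha : TransGen (ArcRel A) (x 0) a) : ∃ i ≤ m, ∃ j < i, a = x i ∧ b = x j := by
  refine (transGen_descends (p := TransGen (ArcRel A) (x 0)) hinj (fun a b hab ha => ?_)
    (fun a b hab ha => ha.tail (hRA hab)) hab ha).imp
    fun i ⟨hi, j, hji, hai, hbj, _⟩ => ⟨hi, j, hji, hai, hbj⟩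
  obtain ⟨i, hi, rfl, rfl⟩ := hsucc b a (Or.inr hab)
  refine ⟨i, hi.lt_of_ne ?_, rfl, rfl⟩
  rintro rfl
  exact hA _ (hclose ▸ ha)

theorem exists_ascent_of_backward_cut (hRA : R ⊆ A) (huv : (x 0, x m) ∈ R) {a b : V}
    (hab : (a, b) ∈ A) (hnR : ¬TransGen (ArcRel R) a b) :
    ∃ i < m, a = x i ∧ b = x (i + 1) := by
  obtain ⟨i, hi, rfl, rfl⟩ := hsucc a b (Or.inl ⟨hab, hnR⟩)
  refine ⟨i, hi.lt_of_ne ?_, rfl, rfl⟩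
  rintro rfl
  exact hA.swap_notMem (hRA huv) (hclose ▸ hab)

/-- An `R`-path leaving `x 0` has to start with the arc `(x 0, x m)`. -/
theorem not_transGen_of_backward_cut (hRA : R ⊆ A) {z : V}
    (hzv : TransGen (ArcRel A) z (x m)) : ¬TransGen (ArcRel R) (x 0) z := by
  intro h
  obtain ⟨y, hy, hyz⟩ := TransGen.head'_iff.mp h
  obtain ⟨i, hi, rfl, hi0⟩ := hsucc y (x 0) (Or.inr hy)
  obtain rfl : i = m := by
    by_contra hne
    exact absurd (hinj _ _ (by omega) (Nat.zero_le _) hi0.symm) (Nat.succ_ne_zero i)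
  exact hA _ (hzv.trans_left (ReflTransGen.mono (fun _ _ h => hRA h) _ _ hyz))

theorem backward_cut_reach (hRA : R ⊆ A) (huv : (x 0, x m) ∈ R) {z b : V} (hz : (x 0, z) ∈ A)
    (hzv : TransGen (ArcRel A) z (x m)) (hb : ReflTransGen (ArcRel A) z b) :
    ∃ j ≤ m, b = x j ∧
      ∀ h < j, (x h, x (h + 1)) ∈ A ∧ ¬TransGen (ArcRel R) (x h) (x (h + 1)) := by
  have hup := fun {a b : V} (hab : (a, b) ∈ A) =>
    exists_ascent_of_backward_cut hA hinj hsucc hclose hRA huv hab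
  induction hb with
  | refl =>
    have hzR := not_transGen_of_backward_cut hA hinj hsucc hclose hRA hzv
    obtain ⟨i, hi, hi0, rfl⟩ := hup hz hzR
    obtain rfl := hinj _ _ hi.le (Nat.zero_le _) hi0.symm
    refine ⟨1, hi, rfl, fun h hh => ?_⟩
    obtain rfl : h = 0 := by omega
    exact ⟨hz, hzR⟩
  | @tail b' b'' hzb' hb'b'' ih =>
    obtain ⟨j', hj', rfl, hcov'⟩ := ih
    by_cases hR : TransGen (ArcRel R) (x j') b''
    · obtain ⟨i, hi, j, hji, hij', rfl⟩ :=
        exists_descent_of_backward_cut hA hinj hsucc hclose hRA hR (.head' hz hzb')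
      obtain rfl := hinj _ _ hi hj' hij'.symm
      exact ⟨j, by omega, rfl, fun h hh => hcov' h (by omega)⟩
    · obtain ⟨i, hi, hij', rfl⟩ := hup hb'b'' hR
      obtain rfl := hinj _ _ hi.le hj' hij'.symm
      refine ⟨i + 1, hi, rfl, fun h hh => ?_⟩
      rcases (Nat.lt_succ_iff.mp hh).lt_or_eq with hh | rfl
      exacts [hcov' h hh, ⟨hb'b'', hR⟩]

/-- The detour through `z` forces every arc of the cycle but the last to be a forward arc; an
acyclic reorientation reversing `(x 0, x m)` inside `R` then keeps the whole cycle. -/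
theorem false_of_backward_cut (hR : CoveredByAR A R) (huv : (x 0, x m) ∈ R) {z : V}
    (hz : (x 0, z) ∈ A) (hzv : TransGen (ArcRel A) z (x m)) : False := by
  obtain ⟨j, hj, hxj, hcov⟩ :=
    backward_cut_reach hA hinj hsucc hclose hR.subset huv hz hzv hzv.to_reflTransGen
  obtain rfl := hinj _ _ le_rfl hj hxj
  have hm : 0 < m := Nat.pos_of_ne_zero fun hm => hA.ne (hR.subset huv) (by rw [hm])
  obtain ⟨B, hB, huvB, hBR⟩ := hR _ huv
  refine hB.2 (x 0) (.tail (TransGen.lift x (fun _ _ h => h) _ _ <|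
    transGen_of_succ_of_lt (fun i j => ArcRel (reorient A B) (x i) (x j))
      (fun h hh => Or.inl ⟨(hcov h hh.2).1, fun hB => (hcov h hh.2).2 (.single (hBR hB))⟩) hm)
    (Or.inr ⟨_, huvB, rfl⟩))

end Cut

theorem false_of_hamiltonian {A R : Set (V × V)} (hA : AcyclicArcs A) (hR : CoveredByAR A R)
    (hforest : IsForestArcs (transRed A)) {c : ℕ → V} {n : ℕ}
    (hc : IsCyclicWalk (joinStep A R) c n)
    (hmin : ∀ c' m, IsCyclicWalk (joinStep A R) c' m → n ≤ m)
    (hcover : ∀ p ∈ A, (∃ s, c s = p.1) ∧ ∃ s, c s = p.2) : False := by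
  have hRA := hR.subset
  have hon : ∀ a b, joinStep A R a b → (∃ s, c s = a) ∧ ∃ s, c s = b := fun a b h =>
    (h.mem_or_swap_mem hRA).elim (hcover _) fun h => (hcover _ h).symm
  have ⟨hn0, hper, hstep⟩ := hc
  have hn : 3 ≤ n := by
    by_contra! h
    interval_cases n
    · exact (hstep 0).asymm hA hRA (by simpa [hper 0] using hstep 0)
    · exact (hstep 0).asymm hA hRA (by simpa [hper 0] using hstep 1)
  obtain ⟨t, ht⟩ := hforest.exists_not_adj hn hper fun _ _ => hc.le_sub_of_eq hmin
  -- cut the cycle open after `c t`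
  obtain ⟨m, rfl⟩ : ∃ m, n = m + 1 := ⟨n - 1, by omega⟩
  have hinj : ∀ i j, i ≤ m → j ≤ m → c (t + 1 + i) = c (t + 1 + j) → i = j :=
    fun i j hi hj => hc.shift_injective hmin (t + 1) (Nat.lt_succ_of_le hi) (Nat.lt_succ_of_le hj)
  have hsucc : ∀ a b, joinStep A R a b →
      ∃ i ≤ m, a = c (t + 1 + i) ∧ b = c (t + 1 + (i + 1)) := fun a b h =>
    let ⟨i, hi, hab⟩ := hc.exists_shift_of_rel hmin (t + 1) h (hon _ _ h).1 (hon _ _ h).2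
    ⟨i, Nat.lt_succ_iff.mp hi, hab⟩
  have hclose : c (t + 1 + (m + 1)) = c (t + 1 + 0) := hper (t + 1)
  have hlast : c (t + 1 + m) = c t := by rw [add_assoc, add_comm 1 m, hper]
  rcases hstep t with ⟨huv, hnR⟩ | hvu
  · obtain ⟨z, hz, hzv⟩ := exists_detour_of_not_adj hA huv ht
    exact false_of_forward_cut hA hinj hsucc hclose hRA (by rwa [hlast]) (by rwa [hlast])
      (hlast ▸ hz) hzv
  · obtain ⟨z, hz, hzv⟩ := exists_detour_of_not_adj hA (hRA hvu) fun h => ht h.symm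
    exact false_of_backward_cut hA hinj hsucc hclose hR (by rwa [hlast]) hz (hlast ▸ hzv)

theorem IsCyclicWalk.mem_image_range [DecidableEq V] {r : V → V → Prop} {c : ℕ → V} {n : ℕ}
    (hc : IsCyclicWalk r c n) (t : ℕ) : c t ∈ (Finset.range n).image c :=
  Finset.mem_image.mpr ⟨t % n, Finset.mem_range.mpr (Nat.mod_lt _ hc.1), hc.2.1.map_mod_nat t⟩

section Join

variable {A R : Set (V × V)}

/-- A counterexample on a minimal vertex set `U` is a shortest cycle through all of `U`. -/
theorem not_isCyclicWalk_joinStep_inducedArcs (hA : AcyclicArcs A) (hV : Vertebrate A)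
    (hR : CoveredByAR A R) (U : Finset V) {c : ℕ → V} {n : ℕ} :
    ¬IsCyclicWalk (joinStep (inducedArcs A U) (inducedArcs R U)) c n := by
  classical
  induction U using Finset.strongInduction generalizing c n with
  | H U IH =>
  intro hc
  obtain ⟨c, n, hc, hmin⟩ := hc.exists_shortest
  have hSU : (Finset.range n).image c ⊆ U := by
    simp only [Finset.image_subset_iff]
    intro t _
    rcases (hc.2.2 t).mem_or_swap_mem (hR.inducedArcs U).subset with h | h
    exacts [h.2.1, h.2.2]
  rcases hSU.ssubset_or_eq with hSU | rfl
  · refine IH _ hSU ⟨hc.1, hc.2.1, fun t => ?_⟩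
    have h := (hc.2.2 t).inducedArcs (hc.mem_image_range t) (hc.mem_image_range (t + 1))
    rwa [inducedArcs_inducedArcs (Finset.coe_subset.mpr hSU.subset),
      inducedArcs_inducedArcs (Finset.coe_subset.mpr hSU.subset)] at h
  · have hon : ∀ v ∈ ((Finset.range n).image c : Set V), ∃ s, c s = v := fun v hv => by
      obtain ⟨s, -, hs⟩ := Finset.mem_image.mp hv
      exact ⟨s, hs⟩
    exact false_of_hamiltonian (hA.mono (inducedArcs_subset _)) (hR.inducedArcs _) (hV _) hc hmin
      fun p hp => ⟨hon _ hp.2.1, hon _ hp.2.2⟩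

theorem ARmem_joinArcs (hA : AcyclicArcs A) (hV : Vertebrate A) (hR : CoveredByAR A R) :
    ARmem A (joinArcs A R) := by
  classical
  refine ⟨fun _ h => h.1, fun v hv => ?_⟩
  obtain ⟨c, n, hc⟩ := IsCyclicWalk.exists_of_transGen
    (TransGen.lift' id (fun _ _ h => transGen_joinStep_of_reorient h) _ _ hv)
  exact not_isCyclicWalk_joinStep_inducedArcs hA hV hR ((Finset.range n).image c)
    ⟨hc.1, hc.2.1, fun t => (hc.2.2 t).inducedArcs (hc.mem_image_range t) (hc.mem_image_range _)⟩

theorem joinArcs_subset {C : Set (V × V)} (hC : ARmem A C) (hRC : R ⊆ C) : joinArcs A R ⊆ C :=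
  fun _ hp => hC.mem_of_transGen hp.1 (TransGen.mono (fun _ _ h => hRC h) _ _ hp.2)

theorem coveredByAR_iUnion {ι : Type*} {B : ι → Set (V × V)} (hB : ∀ i, ARmem A (B i)) :
    CoveredByAR A {p | ∃ i, p ∈ B i} :=
  fun _ ⟨i, hp⟩ => ⟨B i, hB i, hp, fun _ hq => ⟨i, hq⟩⟩

end Join

theorem joinSet_isLUB {A : Set (V × V)} (hA : AcyclicArcs A) (hV : Vertebrate A) {k : ℕ}
    (B : Fin k → ARP A) :
    ∃ h : ARmem A (joinSet A B), IsLUB (Set.range B) ⟨joinSet A B, h⟩ := by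
  refine ⟨ARmem_joinArcs hA hV (coveredByAR_iUnion fun i => (B i).2), ?_, fun C hC => ?_⟩
  · rintro _ ⟨i, rfl⟩ p hp
    exact ⟨(B i).2.1 hp, .single ⟨i, hp⟩⟩
  · refine joinArcs_subset (R := {p | ∃ i, p ∈ (B i).1}) C.2 ?_
    rintro p ⟨i, hp⟩
    exact hC ⟨i, rfl⟩ hp

theorem meetSet_isGLB {A : Set (V × V)} (hA : AcyclicArcs A) (hV : Vertebrate A) {k : ℕ}
    (B : Fin k → ARP A) :
    ∃ h : ARmem A (meetSet A B), IsGLB (Set.range B) ⟨meetSet A B, h⟩ := by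
  refine ⟨(ARmem_joinArcs hA hV (coveredByAR_iUnion fun i => (B i).2.diff)).diff, ?_,
    fun C hC => ?_⟩
  · rintro _ ⟨i, rfl⟩ p ⟨hpA, hpJ⟩
    by_contra hpB
    exact hpJ ⟨hpA, .single ⟨i, hpA, hpB⟩⟩
  · intro p hpC
    have hJ : joinArcs A {q | ∃ i, q ∈ A \ (B i).1} ⊆ A \ C.1 := by
      refine joinArcs_subset C.2.diff ?_
      rintro q ⟨i, hqA, hqB⟩
      exact ⟨hqA, fun hqC => hqB (hC ⟨i, rfl⟩ hqC)⟩
    exact ⟨C.2.1 hpC, fun hpJ => (hJ hpJ).2 hpC⟩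

end

theorem stmt_3_general {V : Type*} (A : Set (V × V)) (hA : IsDAG A)
    (hV : Vertebrate A) (k : ℕ) (B : Fin k → ARP A) :
    (∃ h : ARmem A (joinSet A B), IsLUB (Set.range B) ⟨joinSet A B, h⟩) ∧
    (∃ h : ARmem A (meetSet A B), IsGLB (Set.range B) ⟨meetSet A B, h⟩) :=
  ⟨joinSet_isLUB hA.2.2 hV B, meetSet_isGLB hA.2.2 hV B⟩

/-- Explicit joins and meets in the acyclic reorientation lattice
of a vertebrate directed acyclic graph. -/
theorem stmt_3 {V : Type*} [Fintype V] (A : Set (V × V)) (hA : IsDAG A)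
    (hV : Vertebrate A) (k : ℕ) (hk : 1 ≤ k) (B : Fin k → ARP A) :
    (∃ h : ARmem A (joinSet A B), IsLUB (Set.range B) ⟨joinSet A B, h⟩) ∧
    (∃ h : ARmem A (meetSet A B), IsGLB (Set.range B) ⟨meetSet A B, h⟩) :=
  stmt_3_general A hA hV k B
end
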